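/- Suppose that for each v ∈ W an element m_v ∈ ℤ[X] is given such that the coefficient of e^{e_v} in m_v equals 1 and the support of m_v is contained in {μ ∈ X : μ ≤_a e_v}. Then the family {m_v : v ∈ W} generates ℤ[X] as a module over the invariant subring ℤ[X]^W. In particular, taking m_v = e^{e_v}, the elements e^{e_v} (v ∈ W) generate ℤ[X] as a ℤ[X]^W-module (Steinberg's theorem). -/

import Mathlib

open scoped InnerProductSpace Classical

noncomputable section

/-- A reduced crystallographic root system `Φ` spanning a finite-dimensional real inner
product space `V`, together with a choice of simple roots `π` (determining the positive
system), the corresponding fundamental weights `ω`, the reflections `s`, the Weyl group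
`W` and the weight lattice `X`. -/
structure RootSystemData (V : Type) [NormedAddCommGroup V] [InnerProductSpace ℝ V]
    [FiniteDimensional ℝ V] where
  /-- the (finite) set of roots -/
  Φ : Finset V
  /-- the rank -/
  r : ℕ
  /-- the simple roots `α₁, …, α_r` -/
  π : Fin r → V
  /-- the fundamental weights `ω₁, …, ω_r` -/
  ω : Fin r → V
  /-- the orthogonal reflection attached to a root -/
  s : V → (V ≃ₗ[ℝ] V)
  /-- the Weyl group -/
  W : Subgroup (V ≃ₗ[ℝ] V)
  /-- the weight lattice -/
  X : AddSubgroup V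
  root_ne_zero : ∀ α ∈ Φ, α ≠ (0 : V)
  root_span : Submodule.span ℝ (Φ : Set V) = ⊤
  reduced : ∀ α ∈ Φ, ∀ c : ℝ, c • α ∈ Φ → c = 1 ∨ c = -1
  crystallographic : ∀ α ∈ Φ, ∀ β ∈ Φ, ∃ n : ℤ, 2 * ⟪β, α⟫_ℝ / ⟪α, α⟫_ℝ = (n : ℝ)
  s_apply : ∀ α ∈ Φ, ∀ v : V, s α v = v - (2 * ⟪v, α⟫_ℝ / ⟪α, α⟫_ℝ) • α
  refl_stable : ∀ α ∈ Φ, ∀ β ∈ Φ, s α β ∈ Φ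
  W_eq : W = Subgroup.closure {g : V ≃ₗ[ℝ] V | ∃ α ∈ Φ, g = s α}
  inner_invariant : ∀ g ∈ W, ∀ u v : V, ⟪g u, g v⟫_ℝ = ⟪u, v⟫_ℝ
  simple_mem : ∀ i, π i ∈ Φ
  simple_indep : LinearIndependent ℝ π
  pos_or_neg : ∀ α ∈ Φ,
      (∃ c : Fin r → ℝ, (∀ i, 0 ≤ c i) ∧ α = ∑ i, c i • π i) ∨
      (∃ c : Fin r → ℝ, (∀ i, 0 ≤ c i) ∧ -α = ∑ i, c i • π i)
  fund : ∀ i j, 2 * ⟪ω i, π j⟫_ℝ / ⟪π j, π j⟫_ℝ = if i = j then (1 : ℝ) else 0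
  X_eq : X = AddSubgroup.closure (Set.range ω)
  X_stable : ∀ g ∈ W, ∀ x ∈ X, g x ∈ X

/-- The pairing `(v, α∨) = 2(v,α)/(α,α)` of a vector with the coroot of `α`. -/
def pairing {V : Type} [NormedAddCommGroup V] [InnerProductSpace ℝ V]
    (v α : V) : ℝ := 2 * ⟪v, α⟫_ℝ / ⟪α, α⟫_ℝ

namespace RootSystemData

variable {V : Type} [NormedAddCommGroup V] [InnerProductSpace ℝ V] [FiniteDimensional ℝ V]
variable (C : RootSystemData V)

/-- `α` is a nonnegative combination of the simple roots (a positive root, if `α ∈ Φ`). -/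
def IsPos (α : V) : Prop := ∃ c : Fin C.r → ℝ, (∀ i, 0 ≤ c i) ∧ α = ∑ i, c i • C.π i

/-- `α` is a nonpositive combination of the simple roots (a negative root, if `α ∈ Φ`). -/
def IsNeg (α : V) : Prop := C.IsPos (-α)

/-- A weight is dominant if it pairs nonnegatively with all simple coroots. -/
def IsDominant (lam : V) : Prop := ∀ i, 0 ≤ pairing lam (C.π i)

/-- The product of the simple reflections along a word. -/
def wordProd (l : List (Fin C.r)) : V ≃ₗ[ℝ] V := (l.map fun i => C.s (C.π i)).prod

/-- The length of `w`: the least length of an expression of `w` as a product of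
simple reflections. -/
def length (w : V ≃ₗ[ℝ] V) : ℕ :=
  sInf {n | ∃ l : List (Fin C.r), l.length = n ∧ C.wordProd l = w}

/-- The (strong) Bruhat order on the Weyl group: `u ≤ v` iff `v` is obtained from `u`
by successively multiplying by reflections, increasing the length at each step. -/
def BruhatLE (u v : V ≃ₗ[ℝ] V) : Prop :=
  Relation.ReflTransGen
    (fun a b => (∃ α ∈ C.Φ, b = a * C.s α) ∧ C.length a < C.length b) u v

/-- The Steinberg weight `e_v = v⁻¹ ⬝ ∑_{i : v⁻¹ α_i < 0} ω_i`. -/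
def steinberg (v : V ≃ₗ[ℝ] V) : V :=
  v⁻¹ (∑ i ∈ Finset.univ.filter (fun i => C.IsNeg (v⁻¹ (C.π i))), C.ω i)

/-- The excellent order on weights: `λ ≤ₑ μ` iff `(λ,λ) < (μ,μ)`, or `λ = wν`, `μ = zν`
for some dominant `ν ∈ X` and `w ≤ z` in the Bruhat order. -/
def ExcLE (lam mu : V) : Prop :=
  ⟪lam, lam⟫_ℝ < ⟪mu, mu⟫_ℝ ∨
    ∃ nu ∈ C.X, C.IsDominant nu ∧
      ∃ w ∈ C.W, ∃ z ∈ C.W, C.BruhatLE w z ∧ lam = w nu ∧ mu = z nu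

/-- The strict excellent order. -/
def ExcLT (lam mu : V) : Prop := C.ExcLE lam mu ∧ lam ≠ mu

/-- The antipodal excellent order: `λ ≤ₐ μ` iff `-λ ≤ₑ -μ`. -/
def AntiLE (lam mu : V) : Prop := C.ExcLE (-lam) (-mu)

/-- The strict antipodal excellent order. -/
def AntiLT (lam mu : V) : Prop := C.AntiLE lam mu ∧ lam ≠ mu

/-- The dominance order: `μ ≤_d ν` iff `ν - μ` is a nonnegative integer combination of
the positive roots. -/
def DomLE (mu nu : V) : Prop :=
  ∃ c : V → ℕ, nu - mu = ∑ α ∈ C.Φ.filter (fun a => C.IsPos a), (c α : ℝ) • α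

theorem omega_mem (i : Fin C.r) : C.ω i ∈ C.X := by
  rw [C.X_eq]; exact AddSubgroup.subset_closure ⟨i, rfl⟩

theorem steinberg_mem {v : V ≃ₗ[ℝ] V} (hv : v ∈ C.W) : C.steinberg v ∈ C.X :=
  C.X_stable _ (inv_mem hv) _ (AddSubgroup.sum_mem _ fun i _ => C.omega_mem i)

/-- The group ring `ℤ[X]` of the weight lattice. -/
abbrev GroupRing := AddMonoidAlgebra ℤ ↥C.X

/-- The basis element `e^λ` of `ℤ[X]`. -/
def expo (x : V) (hx : x ∈ C.X) : C.GroupRing := AddMonoidAlgebra.single ⟨x, hx⟩ 1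

/-- `e^λ`, defined for all `λ : V` (and zero off the lattice). -/
def expoOf (x : V) : C.GroupRing := if hx : x ∈ C.X then C.expo x hx else 0

/-- The coefficient of `e^x` in an element of `ℤ[X]`. -/
def coeff (m : C.GroupRing) (x : ↥C.X) : ℤ := m.coeff x

/-- The support of an element of `ℤ[X]`. -/
def supp (m : C.GroupRing) : Finset ↥C.X := m.coeff.support

/-- The action of `g ∈ W` on the weight lattice. -/
def actX (g : V ≃ₗ[ℝ] V) (hg : g ∈ C.W) : ↥C.X → ↥C.X :=
  fun x => ⟨g x, C.X_stable g hg x.1 x.2⟩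

/-- The action of `g ∈ W` on `ℤ[X]`, with `e^λ ↦ e^{gλ}`. -/
def wAct (g : V ≃ₗ[ℝ] V) (hg : g ∈ C.W) (m : C.GroupRing) : C.GroupRing :=
  AddMonoidAlgebra.ofCoeff (Finsupp.mapDomain (C.actX g hg) m.coeff)

/-- `m` lies in the invariant subring `ℤ[X]^W`. -/
def IsWInvariant (m : C.GroupRing) : Prop := ∀ g (hg : g ∈ C.W), C.wAct g hg m = m

/-- The parabolic subgroup `W_{Π'}` generated by the simple reflections `s_α, α ∈ Π'`,
for a subset `Π'` of the simple roots (given by a subset `J` of the index set). -/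
def parabolicSubgroup (J : Set (Fin C.r)) : Subgroup (V ≃ₗ[ℝ] V) :=
  Subgroup.closure {g | ∃ i ∈ J, g = C.s (C.π i)}

theorem parabolic_le (J : Set (Fin C.r)) : C.parabolicSubgroup J ≤ C.W := by
  refine (Subgroup.closure_le _).2 ?_
  rintro g ⟨i, _, rfl⟩
  rw [C.W_eq]
  exact Subgroup.subset_closure ⟨C.π i, C.simple_mem i, rfl⟩

/-- `m` lies in the invariant subring `ℤ[X]^H` for a subgroup `H ≤ W`. -/
def IsInvariantUnder (H : Subgroup (V ≃ₗ[ℝ] V)) (hH : H ≤ C.W) (m : C.GroupRing) : Prop :=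
  ∀ g (hg : g ∈ H), C.wAct g (hH hg) m = m

/-- `v` is of minimal length in its coset `v ⬝ W_{Π'}`. -/
def IsMinCosetRep (J : Set (Fin C.r)) (v : V ≃ₗ[ℝ] V) : Prop :=
  v ∈ C.W ∧ ∀ z ∈ C.parabolicSubgroup J, C.length v ≤ C.length (v * z)

/-- The subgroup generated by the simple reflections fixing a given vector. -/
def fixSubgroup (x : V) : Subgroup (V ≃ₗ[ℝ] V) :=
  Subgroup.closure {g | ∃ i : Fin C.r, C.s (C.π i) x = x ∧ g = C.s (C.π i)}

end RootSystemData

/-!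
Every weight `λ` can be written `λ = v⁻¹ ν + e_v` with `ν` dominant: take `v` making `v λ`
dominant with `ℓ(v⁻¹)` minimal; then `v λ - ∑_{v⁻¹ α_i < 0} ω_i` is still dominant. Multiplying
`e^{e_v}` by the `W`-invariant orbit sum of `ν` gives `e^λ` plus terms `e^{μ + e_v}`,
`μ ∈ Wν \ {v⁻¹ ν}`, and each `μ + e_v` is strictly below `λ` in the order "first by norm, then by
dominance", which is well founded on the lattice. Since `m_v` is `e^{e_v}` plus terms below
`e_v`, and `e_v` is at most `λ`, well-founded induction puts every `e^λ` in the
`ℤ[X]^W`-span of the `m_v`.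
-/

theorem wellFounded_of_finite_setOf_rel {α : Type*} {r : α → α → Prop}
    (htrans : ∀ a b c, r a b → r b c → r a c) (hirrefl : ∀ a, ¬r a a)
    (hfin : ∀ b, {a | r a b}.Finite) : WellFounded r :=
  Subrelation.wf (fun {a b} hab => Set.ncard_lt_ncard
      ⟨fun c hc => htrans c a b hc hab, fun hsub => hirrefl a (hsub hab)⟩ (hfin b))
    (measure fun b => {a | r a b}.ncard).wf

theorem AddMonoidAlgebra.eq_top_of_forall_single_one_mem {G : Type*}
    (M : AddSubgroup (AddMonoidAlgebra ℤ G)) (h : ∀ g, AddMonoidAlgebra.single g 1 ∈ M) :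
    M = ⊤ := by
  refine (AddSubgroup.eq_top_iff' M).2 fun x => ?_
  induction x using AddMonoidAlgebra.induction_linear with
  | zero => exact zero_mem M
  | add x y hx hy => exact add_mem hx hy
  | single g a =>
    have : AddMonoidAlgebra.single g a = a • AddMonoidAlgebra.single g (1 : ℤ) := by
      rw [AddMonoidAlgebra.smul_single', mul_one]
    rw [this]
    exact zsmul_mem (h g) a

theorem AddMonoidAlgebra.single_one_mem_of_coeff_eq_one {G : Type*}
    (M : AddSubgroup (AddMonoidAlgebra ℤ G)) {x : AddMonoidAlgebra ℤ G} (hx : x ∈ M) {e : G}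
    (he : x.coeff e = 1)
    (h : ∀ g ∈ x.coeff.support, g ≠ e → AddMonoidAlgebra.single g 1 ∈ M) :
    AddMonoidAlgebra.single e 1 ∈ M := by
  have hsplit := AddMonoidAlgebra.single_add_erase e x
  rw [he] at hsplit
  rw [← add_sub_cancel_right (AddMonoidAlgebra.single e 1) (x.erase e), hsplit]
  refine sub_mem hx ?_
  rw [← AddMonoidAlgebra.sum_coeff_single (x.erase e), Finsupp.sum]
  refine sum_mem fun g hg => ?_
  rw [AddMonoidAlgebra.coeff_erase, Finsupp.support_erase, Finset.mem_erase] at hg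
  rw [← mul_one ((x.erase e).coeff g), ← AddMonoidAlgebra.smul_single']
  exact zsmul_mem (h g hg.2 hg.1) _

theorem Subring.exists_finset_of_mem_span_image {A ι : Type*} [CommRing A] (S : Subring A)
    (f : ι → A) {s : Set ι} {x : A} (hx : x ∈ Submodule.span S (f '' s)) :
    ∃ (F : Finset ι) (c : ι → A), (∀ i ∈ F, i ∈ s ∧ c i ∈ S) ∧ x = ∑ i ∈ F, c i * f i := by
  obtain ⟨l, hl, rfl⟩ := (Finsupp.mem_span_image_iff_linearCombination S).1 hx
  exact ⟨l.support, fun i => l i, fun i hi => ⟨hl hi, (l i).2⟩, rfl⟩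

section Pairing

variable {V : Type} [NormedAddCommGroup V] [InnerProductSpace ℝ V]

theorem pairing_eq_mul (x α : V) : pairing x α = 2 / ⟪α, α⟫_ℝ * ⟪x, α⟫_ℝ := by
  rw [pairing]; ring

theorem pairing_add (x y α : V) : pairing (x + y) α = pairing x α + pairing y α := by
  simp only [pairing_eq_mul, inner_add_left]; ring

theorem pairing_sub (x y α : V) : pairing (x - y) α = pairing x α - pairing y α := by
  simp only [pairing_eq_mul, inner_sub_left]; ring

theorem pairing_neg (x α : V) : pairing (-x) α = -pairing x α := by
  simp only [pairing_eq_mul, inner_neg_left]; ring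

theorem pairing_smul (c : ℝ) (x α : V) : pairing (c • x) α = c * pairing x α := by
  simp only [pairing_eq_mul, real_inner_smul_left]; ring

theorem pairing_zero (α : V) : pairing 0 α = 0 := by simp [pairing]

theorem pairing_sum {ι : Type*} (s : Finset ι) (f : ι → V) (α : V) :
    pairing (∑ i ∈ s, f i) α = ∑ i ∈ s, pairing (f i) α := by
  simp only [pairing_eq_mul, sum_inner, Finset.mul_sum]

theorem pairing_neg_right (x α : V) : pairing x (-α) = -pairing x α := by
  simp only [pairing_eq_mul, inner_neg_right, inner_neg_left, neg_neg]; ring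

theorem pairing_self {α : V} (hα : α ≠ 0) : pairing α α = 2 := by
  have : ⟪α, α⟫_ℝ ≠ 0 := inner_self_ne_zero.mpr hα
  rw [pairing]; field_simp

theorem pairing_nonneg_iff {x α : V} (hα : α ≠ 0) : 0 ≤ pairing x α ↔ 0 ≤ ⟪x, α⟫_ℝ := by
  have : 0 < 2 / ⟪α, α⟫_ℝ := div_pos two_pos (real_inner_self_pos.mpr hα)
  rw [pairing_eq_mul, mul_nonneg_iff_of_pos_left this]

theorem pairing_pos_iff {x α : V} (hα : α ≠ 0) : 0 < pairing x α ↔ 0 < ⟪x, α⟫_ℝ := by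
  have : 0 < 2 / ⟪α, α⟫_ℝ := div_pos two_pos (real_inner_self_pos.mpr hα)
  rw [pairing_eq_mul, mul_pos_iff_of_pos_left this]

end Pairing

namespace RootSystemData

variable {V : Type} [NormedAddCommGroup V] [InnerProductSpace ℝ V] [FiniteDimensional ℝ V]
variable (C : RootSystemData V)

theorem s_apply_eq {α : V} (hα : α ∈ C.Φ) (v : V) : C.s α v = v - pairing v α • α :=
  C.s_apply α hα v

theorem s_mem_W {α : V} (hα : α ∈ C.Φ) : C.s α ∈ C.W := by
  rw [C.W_eq]; exact Subgroup.subset_closure ⟨α, hα, rfl⟩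

theorem s_simple_mem_W (i : Fin C.r) : C.s (C.π i) ∈ C.W := C.s_mem_W (C.simple_mem i)

theorem s_apply_self {α : V} (hα : α ∈ C.Φ) : C.s α α = -α := by
  rw [C.s_apply_eq hα, pairing_self (C.root_ne_zero α hα)]; module

theorem neg_mem_roots {α : V} (hα : α ∈ C.Φ) : -α ∈ C.Φ := by
  simpa [C.s_apply_self hα] using C.refl_stable α hα α hα

theorem s_s_apply {α : V} (hα : α ∈ C.Φ) (v : V) : C.s α (C.s α v) = v := by
  rw [C.s_apply_eq hα, C.s_apply_eq hα, pairing_sub, pairing_smul,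
    pairing_self (C.root_ne_zero α hα)]
  module

theorem s_mul_self {α : V} (hα : α ∈ C.Φ) : C.s α * C.s α = 1 := by
  ext v; exact C.s_s_apply hα v

theorem s_inv {α : V} (hα : α ∈ C.Φ) : (C.s α)⁻¹ = C.s α :=
  inv_eq_of_mul_eq_one_right (C.s_mul_self hα)

theorem s_neg {α : V} (hα : α ∈ C.Φ) : C.s (-α) = C.s α := by
  ext v
  rw [C.s_apply_eq (C.neg_mem_roots hα), C.s_apply_eq hα, pairing_neg_right]
  module

theorem s_fix_of_pairing_eq_zero {α x : V} (hα : α ∈ C.Φ) (h : pairing x α = 0) :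
    C.s α x = x := by
  rw [C.s_apply_eq hα, h, zero_smul, sub_zero]

theorem apply_mem_roots {g : V ≃ₗ[ℝ] V} (hg : g ∈ C.W) {α : V} (hα : α ∈ C.Φ) :
    g α ∈ C.Φ := by
  suffices ∀ α ∈ C.Φ, g α ∈ C.Φ ∧ g⁻¹ α ∈ C.Φ from (this α hα).1
  rw [C.W_eq] at hg
  induction hg using Subgroup.closure_induction with
  | mem _ h =>
    obtain ⟨β, hβ, rfl⟩ := h
    intro α hα
    rw [C.s_inv hβ]
    exact ⟨C.refl_stable β hβ α hα, C.refl_stable β hβ α hα⟩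
  | one => simp
  | mul x y _ _ hx hy =>
    intro α hα
    refine ⟨(hx _ (hy α hα).1).1, ?_⟩
    rw [mul_inv_rev]
    exact (hy _ (hx α hα).2).2
  | inv x _ hx =>
    intro α hα
    rw [inv_inv]
    exact (hx α hα).symm

theorem pairing_apply {g : V ≃ₗ[ℝ] V} (hg : g ∈ C.W) (x y : V) :
    pairing (g x) (g y) = pairing x y := by
  simp only [pairing, C.inner_invariant g hg]

theorem s_apply_conj {g : V ≃ₗ[ℝ] V} (hg : g ∈ C.W) {α : V} (hα : α ∈ C.Φ) :
    C.s (g α) = g * C.s α * g⁻¹ := by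
  ext v
  have hv : v = g (g⁻¹ v) := by simp
  rw [LinearEquiv.mul_apply, LinearEquiv.mul_apply, C.s_apply_eq (C.apply_mem_roots hg hα),
    C.s_apply_eq hα, map_sub, map_smul]
  conv_lhs => rw [hv, C.pairing_apply hg]

/-! ### Simple roots and the positive cone -/

theorem span_simple_eq_top : Submodule.span ℝ (Set.range C.π) = ⊤ := by
  refine eq_top_iff.2 (C.root_span ▸ Submodule.span_le.2 fun α hα => ?_)
  have hmem : ∀ c : Fin C.r → ℝ, ∑ i, c i • C.π i ∈ Submodule.span ℝ (Set.range C.π) :=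
    fun c => Submodule.sum_mem _ fun i _ => Submodule.smul_mem _ _ (Submodule.subset_span ⟨i, rfl⟩)
  rcases C.pos_or_neg α hα with ⟨c, _, h⟩ | ⟨c, _, h⟩
  · exact h ▸ hmem c
  · simpa [← h] using Submodule.neg_mem _ (hmem c)

def simpleBasis : Module.Basis (Fin C.r) ℝ V :=
  Module.Basis.mk C.simple_indep C.span_simple_eq_top.ge

@[simp]
theorem simpleBasis_apply (i : Fin C.r) : C.simpleBasis i = C.π i := Module.Basis.mk_apply _ _ i

def coord (i : Fin C.r) : V →ₗ[ℝ] ℝ := C.simpleBasis.coord i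

theorem sum_coord_smul_simple (x : V) : ∑ i, C.coord i x • C.π i = x := by
  simpa [coord] using C.simpleBasis.sum_repr x

theorem coord_simple (i j : Fin C.r) :
    C.coord j (C.π i) = if i = j then 1 else 0 := by
  rw [coord, ← C.simpleBasis_apply, Module.Basis.coord_apply, Module.Basis.repr_self,
    Finsupp.single_apply]

theorem coord_sum_smul_simple (c : Fin C.r → ℝ) (i : Fin C.r) :
    C.coord i (∑ j, c j • C.π j) = c i := by
  simp only [map_sum, map_smul, coord_simple, smul_eq_mul, mul_ite, mul_one, mul_zero,
    Finset.sum_ite_eq', Finset.mem_univ, if_true]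

theorem isPos_iff_coord_nonneg (x : V) : C.IsPos x ↔ ∀ i, 0 ≤ C.coord i x := by
  constructor
  · rintro ⟨c, hc, rfl⟩ i
    rw [C.coord_sum_smul_simple]; exact hc i
  · exact fun h => ⟨_, h, (C.sum_coord_smul_simple x).symm⟩

theorem IsPos.coord_nonneg {C : RootSystemData V} {x : V} (hx : C.IsPos x) (i : Fin C.r) :
    0 ≤ C.coord i x :=
  (C.isPos_iff_coord_nonneg x).1 hx i

theorem IsNeg.coord_nonpos {C : RootSystemData V} {x : V} (hx : C.IsNeg x) (i : Fin C.r) :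
    C.coord i x ≤ 0 := by
  simpa using IsPos.coord_nonneg hx i

theorem isPos_zero : C.IsPos 0 := ⟨0, fun _ => le_rfl, by simp⟩

theorem IsPos.add {C : RootSystemData V} {x y : V} (hx : C.IsPos x) (hy : C.IsPos y) :
    C.IsPos (x + y) := by
  rw [isPos_iff_coord_nonneg] at *
  intro i; rw [map_add]; exact add_nonneg (hx i) (hy i)

theorem IsPos.smul {C : RootSystemData V} {c : ℝ} (hc : 0 ≤ c) {x : V} (hx : C.IsPos x) :
    C.IsPos (c • x) := by
  rw [isPos_iff_coord_nonneg] at *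
  intro i; rw [map_smul, smul_eq_mul]; exact mul_nonneg hc (hx i)

theorem isPos_sum {ι : Type*} (s : Finset ι) {f : ι → V} (h : ∀ i ∈ s, C.IsPos (f i)) :
    C.IsPos (∑ i ∈ s, f i) := by
  rw [isPos_iff_coord_nonneg]
  intro j; rw [map_sum]; exact Finset.sum_nonneg fun i hi => (h i hi).coord_nonneg j

theorem isPos_simple (i : Fin C.r) : C.IsPos (C.π i) := by
  rw [isPos_iff_coord_nonneg]
  intro j; rw [coord_simple]; split_ifs <;> norm_num

theorem eq_zero_of_isPos_of_isNeg {x : V} (hx : C.IsPos x) (hx' : C.IsNeg x) : x = 0 := by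
  rw [← C.sum_coord_smul_simple x]
  refine Finset.sum_eq_zero fun i _ => ?_
  rw [le_antisymm (hx'.coord_nonpos i) (hx.coord_nonneg i), zero_smul]

theorem isPos_or_isNeg {α : V} (hα : α ∈ C.Φ) : C.IsPos α ∨ C.IsNeg α := C.pos_or_neg α hα

theorem not_isPos_and_isNeg {α : V} (hα : α ∈ C.Φ) : ¬(C.IsPos α ∧ C.IsNeg α) :=
  fun h => C.root_ne_zero α hα (C.eq_zero_of_isPos_of_isNeg h.1 h.2)

theorem isNeg_iff_not_isPos {α : V} (hα : α ∈ C.Φ) : C.IsNeg α ↔ ¬C.IsPos α :=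
  ⟨fun h hp => C.not_isPos_and_isNeg hα ⟨hp, h⟩, (C.isPos_or_isNeg hα).resolve_left⟩

theorem isPos_iff_not_isNeg {α : V} (hα : α ∈ C.Φ) : C.IsPos α ↔ ¬C.IsNeg α :=
  ⟨fun h hn => C.not_isPos_and_isNeg hα ⟨h, hn⟩, (C.isPos_or_isNeg hα).resolve_right⟩

theorem s_simple_apply (i : Fin C.r) (x : V) :
    C.s (C.π i) x = x - pairing x (C.π i) • C.π i := C.s_apply_eq (C.simple_mem i) x

theorem coord_s_simple_apply {i j : Fin C.r} (hij : i ≠ j) (x : V) :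
    C.coord j (C.s (C.π i) x) = C.coord j x := by
  simp [C.s_simple_apply, coord_simple, hij]

theorem exists_coord_pos_of_ne_simple {β : V} (hβ : β ∈ C.Φ) (hpos : C.IsPos β) {i : Fin C.r}
    (hne : β ≠ C.π i) : ∃ j, j ≠ i ∧ 0 < C.coord j β := by
  by_contra! h
  have hcoord : ∀ j, j ≠ i → C.coord j β = 0 :=
    fun j hj => le_antisymm (h j hj) (hpos.coord_nonneg j)
  have hβeq : β = C.coord i β • C.π i := by
    conv_lhs => rw [← C.sum_coord_smul_simple β]
    exact Finset.sum_eq_single i (fun j _ hj => by rw [hcoord j hj, zero_smul]) (by simp)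
  rcases C.reduced _ (C.simple_mem i) _ (hβeq ▸ hβ) with h1 | h1
  · exact hne (by rw [hβeq, h1, one_smul])
  · refine C.not_isPos_and_isNeg (C.simple_mem i) ⟨C.isPos_simple i, ?_⟩
    rw [IsNeg, show -C.π i = β by rw [hβeq, h1, neg_one_smul]]
    exact hpos

theorem isPos_s_simple_apply {β : V} (hβ : β ∈ C.Φ) (hpos : C.IsPos β) {i : Fin C.r}
    (hne : β ≠ C.π i) : C.IsPos (C.s (C.π i) β) := by
  obtain ⟨j, hji, hj⟩ := C.exists_coord_pos_of_ne_simple hβ hpos hne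
  refine (C.isPos_iff_not_isNeg (C.refl_stable _ (C.simple_mem i) _ hβ)).2 fun hneg => ?_
  have := hneg.coord_nonpos j
  rw [C.coord_s_simple_apply (Ne.symm hji)] at this
  linarith

theorem eq_simple_of_isNeg_s_apply {β : V} (hβ : β ∈ C.Φ) (hpos : C.IsPos β) {i : Fin C.r}
    (hneg : C.IsNeg (C.s (C.π i) β)) : β = C.π i := by
  by_contra hne
  exact C.not_isPos_and_isNeg (C.refl_stable _ (C.simple_mem i) _ hβ)
    ⟨C.isPos_s_simple_apply hβ hpos hne, hneg⟩

theorem inner_simple_nonpos {i j : Fin C.r} (hij : i ≠ j) : ⟪C.π i, C.π j⟫_ℝ ≤ 0 := by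
  by_contra! h
  have hp := (pairing_pos_iff (C.root_ne_zero _ (C.simple_mem j))).2 h
  have hγ := C.refl_stable _ (C.simple_mem j) _ (C.simple_mem i)
  rcases C.isPos_or_isNeg hγ with hγ' | hγ'
  · have := hγ'.coord_nonneg j
    simp only [C.s_simple_apply, map_sub, map_smul, coord_simple, if_neg hij,
      smul_eq_mul, zero_sub] at this
    norm_num at this
    linarith
  · have := hγ'.coord_nonpos i
    rw [C.coord_s_simple_apply (Ne.symm hij), coord_simple, if_pos rfl] at this
    norm_num at this

def height (x : V) : ℝ := ∑ i, C.coord i x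

theorem height_s_simple_apply (i : Fin C.r) (x : V) :
    C.height (C.s (C.π i) x) = C.height x - pairing x (C.π i) := by
  simp only [height, C.s_simple_apply, map_sub, map_smul, coord_simple, smul_eq_mul, mul_ite,
    mul_one, mul_zero, Finset.sum_sub_distrib, Finset.sum_ite_eq, Finset.mem_univ, if_true]

theorem wordProd_nil : C.wordProd [] = 1 := by simp [wordProd]

theorem wordProd_cons (i : Fin C.r) (l : List (Fin C.r)) :
    C.wordProd (i :: l) = C.s (C.π i) * C.wordProd l := by simp [wordProd]

theorem wordProd_append (l l' : List (Fin C.r)) :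
    C.wordProd (l ++ l') = C.wordProd l * C.wordProd l' := by simp [wordProd]

theorem wordProd_singleton (i : Fin C.r) : C.wordProd [i] = C.s (C.π i) := by simp [wordProd]

theorem wordProd_mem (l : List (Fin C.r)) : C.wordProd l ∈ C.W := by
  induction l with
  | nil => rw [C.wordProd_nil]; exact one_mem _
  | cons i t ih => rw [C.wordProd_cons]; exact mul_mem (C.s_simple_mem_W i) ih

theorem wordProd_reverse (l : List (Fin C.r)) : C.wordProd l.reverse = (C.wordProd l)⁻¹ := by
  induction l with
  | nil => simp [wordProd]
  | cons i t ih =>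
    rw [List.reverse_cons, C.wordProd_append, ih, C.wordProd_singleton, C.wordProd_cons,
      mul_inv_rev, C.s_inv (C.simple_mem i)]

/-- A positive root that is not simple is sent by some `s_i` to a positive root of smaller
height; as `s_{s_i β} = s_i s_β s_i`, induction on the height writes `s_α` as a word. -/
theorem exists_wordProd_eq_s_of_isPos {α : V} (hα : α ∈ C.Φ) (hpos : C.IsPos α) :
    ∃ l, C.wordProd l = C.s α := by
  induction hn : (C.Φ.filter fun γ => C.height γ < C.height α).card
    using Nat.strong_induction_on generalizing α with
  | _ n ih =>
  by_cases hsimple : ∃ i, α = C.π i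
  · obtain ⟨i, rfl⟩ := hsimple
    exact ⟨[i], C.wordProd_singleton i⟩
  simp only [not_exists] at hsimple
  obtain ⟨i, hi⟩ : ∃ i, 0 < ⟪α, C.π i⟫_ℝ := by
    by_contra! h
    have hsum : ⟪α, α⟫_ℝ = ∑ i, C.coord i α * ⟪α, C.π i⟫_ℝ := by
      nth_rw 2 [← C.sum_coord_smul_simple α]
      simp only [inner_sum, real_inner_smul_right]
    have hnonpos : ∑ i, C.coord i α * ⟪α, C.π i⟫_ℝ ≤ 0 :=
      Finset.sum_nonpos fun i _ => mul_nonpos_of_nonneg_of_nonpos (hpos.coord_nonneg i) (h i)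
    linarith [real_inner_self_pos.2 (C.root_ne_zero α hα)]
  replace hi := (pairing_pos_iff (C.root_ne_zero _ (C.simple_mem i))).2 hi
  set β := C.s (C.π i) α
  have hβ : β ∈ C.Φ := C.refl_stable _ (C.simple_mem i) _ hα
  have hlt : C.height β < C.height α := by
    rw [C.height_s_simple_apply]; linarith
  have hcard : (C.Φ.filter fun γ => C.height γ < C.height β).card < n := by
    rw [← hn]
    refine Finset.card_lt_card (Finset.ssubset_iff_of_subset ?_ |>.2 ⟨β, ?_, ?_⟩)
    · intro γ hγ
      simp only [Finset.mem_filter] at hγ ⊢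
      exact ⟨hγ.1, hγ.2.trans hlt⟩
    · exact Finset.mem_filter.2 ⟨hβ, hlt⟩
    · simp
  obtain ⟨l, hl⟩ := ih _ hcard hβ (C.isPos_s_simple_apply hα hpos (hsimple i)) rfl
  refine ⟨[i] ++ l ++ [i], ?_⟩
  have hαβ : α = C.s (C.π i) β := (C.s_s_apply (C.simple_mem i) α).symm
  rw [C.wordProd_append, C.wordProd_append, C.wordProd_singleton, hl, hαβ,
    C.s_apply_conj (C.s_simple_mem_W i) hβ, C.s_inv (C.simple_mem i)]

theorem exists_wordProd_eq {g : V ≃ₗ[ℝ] V} (hg : g ∈ C.W) : ∃ l, C.wordProd l = g := by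
  rw [C.W_eq] at hg
  induction hg using Subgroup.closure_induction with
  | mem _ h =>
    obtain ⟨α, hα, rfl⟩ := h
    rcases C.isPos_or_isNeg hα with h | h
    · exact C.exists_wordProd_eq_s_of_isPos hα h
    · rw [← C.s_neg hα]; exact C.exists_wordProd_eq_s_of_isPos (C.neg_mem_roots hα) h
  | one => exact ⟨[], C.wordProd_nil⟩
  | mul x y _ _ hx hy =>
    obtain ⟨l, rfl⟩ := hx
    obtain ⟨l', rfl⟩ := hy
    exact ⟨l ++ l', C.wordProd_append l l'⟩
  | inv x _ hx =>
    obtain ⟨l, rfl⟩ := hx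
    exact ⟨l.reverse, C.wordProd_reverse l⟩

/-! ### Length and the exchange condition -/

theorem length_le_of_wordProd_eq {g : V ≃ₗ[ℝ] V} {l : List (Fin C.r)} (hl : C.wordProd l = g) :
    C.length g ≤ l.length :=
  Nat.sInf_le ⟨l, rfl, hl⟩

theorem exists_reduced_word {g : V ≃ₗ[ℝ] V} (hg : g ∈ C.W) :
    ∃ l : List (Fin C.r), l.length = C.length g ∧ C.wordProd l = g := by
  obtain ⟨l, hl⟩ := C.exists_wordProd_eq hg
  exact Nat.sInf_mem (s := {n | ∃ l : List (Fin C.r), l.length = n ∧ C.wordProd l = g})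
    ⟨l.length, l, rfl, hl⟩

/-- The strong exchange condition. -/
theorem exists_eraseIdx_eq_mul_s (l : List (Fin C.r)) {α : V} (hα : α ∈ C.Φ)
    (hpos : C.IsPos α) (hneg : C.IsNeg (C.wordProd l α)) :
    ∃ j < l.length, C.wordProd (l.eraseIdx j) = C.wordProd l * C.s α := by
  induction l with
  | nil =>
    rw [C.wordProd_nil] at hneg
    exact (C.not_isPos_and_isNeg hα ⟨hpos, hneg⟩).elim
  | cons i t ih =>
    rw [C.wordProd_cons, LinearEquiv.mul_apply] at hneg
    have htα : C.wordProd t α ∈ C.Φ := C.apply_mem_roots (C.wordProd_mem t) hα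
    rcases C.isPos_or_isNeg htα with htpos | htneg
    · refine ⟨0, by simp, ?_⟩
      rw [List.eraseIdx_cons_zero, C.wordProd_cons,
        ← C.eq_simple_of_isNeg_s_apply htα htpos hneg, C.s_apply_conj (C.wordProd_mem t) hα]
      group
      rw [mul_assoc, C.s_mul_self hα, mul_one]
    · obtain ⟨j, hj, hword⟩ := ih htneg
      refine ⟨j + 1, by simpa using hj, ?_⟩
      rw [List.eraseIdx_cons_succ, C.wordProd_cons, hword, C.wordProd_cons, mul_assoc]

theorem length_mul_s_lt_of_isNeg {w : V ≃ₗ[ℝ] V} (hw : w ∈ C.W) {α : V} (hα : α ∈ C.Φ)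
    (hpos : C.IsPos α) (hneg : C.IsNeg (w α)) : C.length (w * C.s α) < C.length w := by
  obtain ⟨l, hlen, rfl⟩ := C.exists_reduced_word hw
  obtain ⟨j, hj, hword⟩ := C.exists_eraseIdx_eq_mul_s l hα hpos hneg
  have := C.length_le_of_wordProd_eq hword
  rw [List.length_eraseIdx_of_lt hj] at this
  omega

theorem length_lt_mul_s_of_isPos {w : V ≃ₗ[ℝ] V} (hw : w ∈ C.W) {α : V} (hα : α ∈ C.Φ)
    (hpos : C.IsPos α) (hwpos : C.IsPos (w α)) : C.length w < C.length (w * C.s α) := by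
  have hneg : C.IsNeg ((w * C.s α) α) := by
    rwa [LinearEquiv.mul_apply, C.s_apply_self hα, map_neg, IsNeg, neg_neg]
  simpa [mul_assoc, C.s_mul_self hα] using
    C.length_mul_s_lt_of_isNeg (mul_mem hw (C.s_mem_W hα)) hα hpos hneg

theorem isPos_apply_of_length_lt_mul_s {w : V ≃ₗ[ℝ] V} (hw : w ∈ C.W) {α : V} (hα : α ∈ C.Φ)
    (hpos : C.IsPos α) (hlt : C.length w < C.length (w * C.s α)) : C.IsPos (w α) :=
  (C.isPos_iff_not_isNeg (C.apply_mem_roots hw hα)).2 fun hneg =>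
    (C.length_mul_s_lt_of_isNeg hw hα hpos hneg).not_gt hlt

theorem exists_isNeg_apply_simple {w : V ≃ₗ[ℝ] V} (hw : w ∈ C.W) (hne : w ≠ 1) :
    ∃ i, C.IsNeg (w (C.π i)) ∧ C.length (w * C.s (C.π i)) < C.length w := by
  obtain ⟨l, hlen, hl⟩ := C.exists_reduced_word hw
  rcases List.eq_nil_or_concat l with rfl | ⟨l', i, rfl⟩
  · exact (hne (hl ▸ C.wordProd_nil)).elim
  rw [List.concat_eq_append] at hlen hl
  have hmul : C.wordProd l' = w * C.s (C.π i) := by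
    rw [← hl, C.wordProd_append, C.wordProd_singleton, mul_assoc, C.s_mul_self (C.simple_mem i),
      mul_one]
  have hlt : C.length (w * C.s (C.π i)) < C.length w := by
    have := C.length_le_of_wordProd_eq hmul
    rw [List.length_append, List.length_singleton] at hlen
    omega
  refine ⟨i, (C.isNeg_iff_not_isPos (C.apply_mem_roots hw (C.simple_mem i))).2 fun hpos => ?_, hlt⟩
  exact (C.length_lt_mul_s_of_isPos hw (C.simple_mem i) (C.isPos_simple i) hpos).not_gt hlt

section

variable {C}

theorem IsDominant.inner_nonneg_of_isPos {ν x : V} (hν : C.IsDominant ν) (hx : C.IsPos x) :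
    0 ≤ ⟪ν, x⟫_ℝ := by
  obtain ⟨c, hc, rfl⟩ := hx
  rw [inner_sum]
  refine Finset.sum_nonneg fun i _ => ?_
  rw [real_inner_smul_right]
  exact mul_nonneg (hc i) ((pairing_nonneg_iff (C.root_ne_zero _ (C.simple_mem i))).1 (hν i))

theorem IsDominant.pairing_nonneg_of_isPos {ν β : V} (hν : C.IsDominant ν) (hβ : β ∈ C.Φ)
    (hpos : C.IsPos β) : 0 ≤ pairing ν β :=
  (pairing_nonneg_iff (C.root_ne_zero β hβ)).2 (hν.inner_nonneg_of_isPos hpos)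

theorem IsDominant.isPos_sub_apply {σ : V} (hσ : C.IsDominant σ) {w : V ≃ₗ[ℝ] V}
    (hw : w ∈ C.W) : C.IsPos (σ - w σ) := by
  induction hn : C.length w using Nat.strong_induction_on generalizing w with
  | _ n ih =>
  rcases eq_or_ne w 1 with rfl | hne
  · simpa using C.isPos_zero
  obtain ⟨i, hneg, hlt⟩ := C.exists_isNeg_apply_simple hw hne
  set w' := w * C.s (C.π i)
  have hw' : w = w' * C.s (C.π i) := by
    rw [mul_assoc, C.s_mul_self (C.simple_mem i), mul_one]
  have hpos : C.IsPos (w' (C.π i)) := by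
    rwa [LinearEquiv.mul_apply, C.s_apply_self (C.simple_mem i), map_neg, ← IsNeg]
  have hsplit : σ - w σ = (σ - w' σ) + pairing σ (C.π i) • w' (C.π i) := by
    rw [hw', LinearEquiv.mul_apply, C.s_simple_apply, map_sub, map_smul]
    abel
  rw [hsplit]
  exact (ih _ (hn ▸ hlt) (mul_mem hw (C.s_simple_mem_W i)) rfl).add (hpos.smul (hσ i))

theorem mem_W_of_bruhatLE {a b : V ≃ₗ[ℝ] V} (ha : a ∈ C.W) (hab : C.BruhatLE a b) : b ∈ C.W := by
  induction hab with
  | refl => exact ha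
  | tail _ hstep ih =>
    obtain ⟨⟨α, hα, rfl⟩, -⟩ := hstep
    exact mul_mem ih (C.s_mem_W hα)

theorem IsDominant.isPos_sub_of_bruhatLE {ν : V} (hν : C.IsDominant ν) {a b : V ≃ₗ[ℝ] V}
    (ha : a ∈ C.W) (hab : C.BruhatLE a b) : C.IsPos (a ν - b ν) := by
  induction hab with
  | refl => simpa using C.isPos_zero
  | @tail c _ hac hstep ih =>
    obtain ⟨⟨α, hα, rfl⟩, hlt⟩ := hstep
    obtain ⟨β, hβ, hβpos, hsβ⟩ : ∃ β ∈ C.Φ, C.IsPos β ∧ C.s α = C.s β := by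
      rcases C.isPos_or_isNeg hα with h | h
      · exact ⟨α, hα, h, rfl⟩
      · exact ⟨-α, C.neg_mem_roots hα, h, (C.s_neg hα).symm⟩
    rw [hsβ] at hlt ⊢
    have hcβ := C.isPos_apply_of_length_lt_mul_s (C.mem_W_of_bruhatLE ha hac) hβ hβpos hlt
    have hsplit : a ν - (c * C.s β) ν = (a ν - c ν) + pairing ν β • c β := by
      rw [LinearEquiv.mul_apply, C.s_apply_eq hβ, map_sub, map_smul]
      abel
    rw [hsplit]
    exact ih.add (hcβ.smul (hν.pairing_nonneg_of_isPos hβ hβpos))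

end

/-! ### The weight lattice -/

theorem pairing_omega (i j : Fin C.r) : pairing (C.ω i) (C.π j) = if i = j then 1 else 0 :=
  C.fund i j

theorem pairing_sum_smul_omega (c : Fin C.r → ℝ) (i : Fin C.r) :
    pairing (∑ j, c j • C.ω j) (C.π i) = c i := by
  simp only [pairing_sum, pairing_smul, pairing_omega, mul_ite, mul_one, mul_zero,
    Finset.sum_ite_eq', Finset.mem_univ, if_true]

theorem linearIndependent_omega : LinearIndependent ℝ C.ω :=
  Fintype.linearIndependent_iff.2 fun g hg i => by
    rw [← C.pairing_sum_smul_omega g i, hg, pairing_zero]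

theorem span_omega_eq_top : Submodule.span ℝ (Set.range C.ω) = ⊤ :=
  C.linearIndependent_omega.span_eq_top_of_card_eq_finrank'
    (Module.finrank_eq_card_basis C.simpleBasis).symm

theorem sum_pairing_smul_omega (x : V) : ∑ j, pairing x (C.π j) • C.ω j = x := by
  obtain ⟨c, rfl⟩ := Submodule.mem_span_range_iff_exists_fun ℝ |>.1
    (C.span_omega_eq_top ▸ Submodule.mem_top : x ∈ Submodule.span ℝ (Set.range C.ω))
  simp only [pairing_sum_smul_omega]

def omegaBasis : Module.Basis (Fin C.r) ℝ V :=
  Module.Basis.mk C.linearIndependent_omega C.span_omega_eq_top.ge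

theorem X_eq_span_omegaBasis : (C.X : Set V) = Submodule.span ℤ (Set.range C.omegaBasis) := by
  rw [← Submodule.coe_toAddSubgroup, Submodule.span_int_eq_addSubgroupClosure, C.X_eq,
    omegaBasis, Module.Basis.coe_mk]

theorem finite_setOf_mem_X_inner_self_le (c : ℝ) :
    {x | x ∈ C.X ∧ ⟪x, x⟫_ℝ ≤ c}.Finite := by
  refine (ZSpan.setFinite_inter C.omegaBasis (Metric.isBounded_closedBall (x := 0)
    (r := √c))).subset fun x ⟨hx, hxc⟩ => ⟨?_, C.X_eq_span_omegaBasis ▸ hx⟩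
  rw [mem_closedBall_zero_iff, Real.le_sqrt (norm_nonneg x) (le_trans (real_inner_self_nonneg) hxc),
    ← real_inner_self_eq_norm_sq]
  exact hxc

theorem exists_pairing_simple_eq_intCast {x : V} (hx : x ∈ C.X) (i : Fin C.r) :
    ∃ n : ℤ, pairing x (C.π i) = n := by
  rw [C.X_eq] at hx
  induction hx using AddSubgroup.closure_induction with
  | mem x hx =>
    obtain ⟨j, rfl⟩ := hx
    exact ⟨if j = i then 1 else 0, by rw [C.pairing_omega]; split_ifs <;> simp⟩
  | zero => exact ⟨0, by simp [pairing_zero]⟩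
  | add x y _ _ hx hy =>
    obtain ⟨n, hn⟩ := hx
    obtain ⟨m, hm⟩ := hy
    exact ⟨n + m, by rw [pairing_add, hn, hm]; push_cast; ring⟩
  | neg x _ hx =>
    obtain ⟨n, hn⟩ := hx
    exact ⟨-n, by rw [pairing_neg, hn]; push_cast; ring⟩

/-- Write `ω_i = P - N` with `P`, `N` nonnegative combinations of simple roots with disjoint
supports. Then `⟪N, P⟫ ≤ 0` since distinct simple roots are obtuse, and `⟪N, ω_i⟫ ≥ 0`, so
`⟪N, N⟫ = ⟪N, P⟫ - ⟪N, ω_i⟫ ≤ 0` and `N = 0`. -/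
theorem isPos_omega (i : Fin C.r) : C.IsPos (C.ω i) := by
  set c := fun j => C.coord j (C.ω i)
  set P := ∑ j, max (c j) 0 • C.π j
  set N := ∑ j, max (-c j) 0 • C.π j
  have hsplit : C.ω i = P - N := by
    conv_lhs => rw [← C.sum_coord_smul_simple (C.ω i)]
    rw [← Finset.sum_sub_distrib]
    refine Finset.sum_congr rfl fun j _ => ?_
    rw [← sub_smul, max_zero_sub_max_neg_zero_eq_self]
  have hNω : 0 ≤ ⟪N, C.ω i⟫_ℝ := by
    simp only [N, sum_inner, real_inner_smul_left]
    refine Finset.sum_nonneg fun j _ => mul_nonneg (le_max_right _ _) ?_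
    rw [real_inner_comm, ← pairing_nonneg_iff (C.root_ne_zero _ (C.simple_mem j)),
      C.pairing_omega]
    split_ifs <;> norm_num
  have hNP : ⟪N, P⟫_ℝ ≤ 0 := by
    simp only [N, P, sum_inner, inner_sum, real_inner_smul_left, real_inner_smul_right]
    refine Finset.sum_nonpos fun j _ => Finset.sum_nonpos fun k _ => ?_
    rcases eq_or_ne j k with rfl | hjk
    · rcases le_total (c j) 0 with h | h
      · simp [max_eq_right h]
      · simp [max_eq_right (neg_nonpos.2 h)]
    · rw [← mul_assoc]
      exact mul_nonpos_of_nonneg_of_nonpos (mul_nonneg (le_max_right _ _) (le_max_right _ _))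
        (C.inner_simple_nonpos hjk.symm)
  have hN : N = 0 := by
    have : ⟪N, N⟫_ℝ ≤ 0 := by
      have := congrArg (fun v => ⟪N, v⟫_ℝ) hsplit
      simp only [inner_sub_right] at this
      linarith
    exact real_inner_self_nonpos.1 this
  rw [hsplit, hN, sub_zero]
  exact C.isPos_sum _ fun j _ => (C.isPos_simple j).smul (le_max_right _ _)

theorem IsDominant.inner_nonneg {C : RootSystemData V} {ν σ : V} (hν : C.IsDominant ν)
    (hσ : C.IsDominant σ) : 0 ≤ ⟪ν, σ⟫_ℝ := by
  rw [← C.sum_pairing_smul_omega σ, inner_sum]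
  exact Finset.sum_nonneg fun j _ => by
    rw [real_inner_smul_right]
    exact mul_nonneg (hσ j) (hν.inner_nonneg_of_isPos (C.isPos_omega j))

/-- A coarsening of the antipodal excellent order (`normLexLT_of_antiLE`) that is well founded
on the weight lattice. -/
def NormLexLT (x y : V) : Prop :=
  ⟪x, x⟫_ℝ < ⟪y, y⟫_ℝ ∨ (⟪x, x⟫_ℝ = ⟪y, y⟫_ℝ ∧ C.IsPos (y - x) ∧ x ≠ y)

variable {C}

theorem NormLexLT.inner_self_le {x y : V} (h : C.NormLexLT x y) : ⟪x, x⟫_ℝ ≤ ⟪y, y⟫_ℝ := by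
  rcases h with h | h
  exacts [h.le, h.1.le]

theorem NormLexLT.trans {x y z : V} (hxy : C.NormLexLT x y) (hyz : C.NormLexLT y z) :
    C.NormLexLT x z := by
  rcases hxy with hxy | ⟨hxy, hpxy, hne⟩
  · exact Or.inl (hxy.trans_le hyz.inner_self_le)
  rcases hyz with hyz | ⟨hyz, hpyz, -⟩
  · exact Or.inl (hxy.trans_lt hyz)
  refine Or.inr ⟨hxy.trans hyz, by simpa using hpyz.add hpxy, fun hxz => hne ?_⟩
  subst hxz
  exact (sub_eq_zero.1 (C.eq_zero_of_isPos_of_isNeg hpxy (by simpa [IsNeg] using hpyz))).symm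

theorem NormLexLT.irrefl (x : V) : ¬C.NormLexLT x x := by
  rintro (h | h)
  exacts [lt_irrefl _ h, h.2.2 rfl]

variable (C)

theorem wellFounded_normLexLT : WellFounded fun a b : C.X => C.NormLexLT a b :=
  wellFounded_of_finite_setOf_rel (fun _ _ _ => NormLexLT.trans)
    (fun a => NormLexLT.irrefl (C := C) (a : V))
    fun b => (C.finite_setOf_mem_X_inner_self_le ⟪(b : V), (b : V)⟫_ℝ).preimage
      Subtype.val_injective.injOn |>.subset fun a ha => ⟨a.2, NormLexLT.inner_self_le ha⟩

theorem normLexLT_of_antiLE {x y : V} (h : C.AntiLE x y) (hne : x ≠ y) : C.NormLexLT x y := by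
  rcases h with h | ⟨ν, -, hν, a, ha, b, -, hab, hxa, hyb⟩
  · exact Or.inl (by simpa using h)
  refine Or.inr ⟨?_, ?_, hne⟩
  · rw [← inner_neg_neg, hxa, ← inner_neg_neg y, hyb, C.inner_invariant a ha,
      C.inner_invariant b (C.mem_W_of_bruhatLE ha hab)]
  · have := hν.isPos_sub_of_bruhatLE ha hab
    rwa [← hxa, ← hyb, neg_sub_neg] at this

/-! ### Steinberg's decomposition -/

def orbit (x : V) : Set V := {y | ∃ g ∈ C.W, g x = y}

theorem finite_orbit {x : V} (hx : x ∈ C.X) : (C.orbit x).Finite :=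
  (C.finite_setOf_mem_X_inner_self_le ⟪x, x⟫_ℝ).subset fun _ ⟨g, hg, hy⟩ =>
    hy ▸ ⟨C.X_stable g hg x hx, (C.inner_invariant g hg x x).le⟩

/-- An element of maximal height in the (finite) orbit of `x` is dominant. -/
theorem exists_isDominant_apply {x : V} (hx : x ∈ C.X) : ∃ g ∈ C.W, C.IsDominant (g x) := by
  obtain ⟨_, ⟨g, hg, rfl⟩, hmax⟩ :=
    Set.exists_max_image _ C.height (C.finite_orbit hx) ⟨x, 1, one_mem _, rfl⟩
  refine ⟨g, hg, fun i => not_lt.1 fun hlt => ?_⟩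
  have := hmax _ ⟨C.s (C.π i) * g, mul_mem (C.s_simple_mem_W i) hg, rfl⟩
  rw [LinearEquiv.mul_apply, C.height_s_simple_apply] at this
  linarith

/-- Choosing `v` with `ℓ(v⁻¹)` minimal among those making `v x` dominant, `v⁻¹ α_i > 0` for every
simple root `α_i` orthogonal to `v x`. -/
theorem exists_isDominant_apply_isPos_inv_apply {x : V} (hx : x ∈ C.X) :
    ∃ v ∈ C.W, C.IsDominant (v x) ∧
      ∀ i, pairing (v x) (C.π i) = 0 → C.IsPos (v⁻¹ (C.π i)) := by
  have hex : ∃ n, ∃ v ∈ C.W, C.IsDominant (v x) ∧ C.length v⁻¹ = n := by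
    obtain ⟨v, hv, hdom⟩ := C.exists_isDominant_apply hx
    exact ⟨_, v, hv, hdom, rfl⟩
  obtain ⟨v, hv, hdom, hlen⟩ := Nat.find_spec hex
  refine ⟨v, hv, hdom, fun i hi => ?_⟩
  by_contra hpos
  have hlt := C.length_mul_s_lt_of_isNeg (inv_mem hv) (C.simple_mem i) (C.isPos_simple i)
    ((C.isNeg_iff_not_isPos (C.apply_mem_roots (inv_mem hv) (C.simple_mem i))).2 hpos)
  refine Nat.find_min hex (hlen ▸ hlt) ⟨C.s (C.π i) * v, mul_mem (C.s_simple_mem_W i) hv, ?_, ?_⟩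
  · rwa [LinearEquiv.mul_apply, C.s_fix_of_pairing_eq_zero (C.simple_mem i) hi]
  · rw [mul_inv_rev, C.s_inv (C.simple_mem i)]

def descentWeight (v : V ≃ₗ[ℝ] V) : V :=
  ∑ i ∈ Finset.univ.filter (fun i => C.IsNeg (v⁻¹ (C.π i))), C.ω i

theorem steinberg_eq_inv_apply_descentWeight (v : V ≃ₗ[ℝ] V) :
    C.steinberg v = v⁻¹ (C.descentWeight v) := rfl

theorem descentWeight_mem_X (v : V ≃ₗ[ℝ] V) : C.descentWeight v ∈ C.X :=
  AddSubgroup.sum_mem _ fun i _ => C.omega_mem i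

theorem pairing_descentWeight (v : V ≃ₗ[ℝ] V) (j : Fin C.r) :
    pairing (C.descentWeight v) (C.π j) = if C.IsNeg (v⁻¹ (C.π j)) then 1 else 0 := by
  simp only [descentWeight, pairing_sum, pairing_omega, Finset.sum_ite_eq', Finset.mem_filter,
    Finset.mem_univ, true_and]

theorem isDominant_descentWeight (v : V ≃ₗ[ℝ] V) : C.IsDominant (C.descentWeight v) := by
  intro i
  rw [pairing_descentWeight]
  split_ifs <;> norm_num

/-- A positive vector orthogonal to `descentWeight v` is supported on the simple roots that `v⁻¹`
keeps positive, hence `v⁻¹` keeps it positive. -/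
theorem isPos_inv_apply_of_inner_descentWeight_eq_zero {v : V ≃ₗ[ℝ] V} (hv : v ∈ C.W) {δ : V}
    (hδ : C.IsPos δ) (h : ⟪δ, C.descentWeight v⟫_ℝ = 0) : C.IsPos (v⁻¹ δ) := by
  obtain ⟨c, hc, rfl⟩ := hδ
  have hterm : ∀ j, 0 ≤ c j * ⟪C.π j, C.descentWeight v⟫_ℝ := fun j =>
    mul_nonneg (hc j) (real_inner_comm (C.π j) _ ▸
      (C.isDominant_descentWeight v).inner_nonneg_of_isPos (C.isPos_simple j))
  rw [sum_inner] at h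
  simp only [real_inner_smul_left] at h
  rw [map_sum]
  refine C.isPos_sum _ fun j _ => ?_
  rw [map_smul]
  by_cases hneg : C.IsNeg (v⁻¹ (C.π j))
  · have hpair : 0 < ⟪C.π j, C.descentWeight v⟫_ℝ := by
      rw [real_inner_comm, ← pairing_pos_iff (C.root_ne_zero _ (C.simple_mem j)),
        pairing_descentWeight, if_pos hneg]
      exact one_pos
    have := (Finset.sum_eq_zero_iff_of_nonneg fun j _ => hterm j).1 h j (Finset.mem_univ j)
    rw [(mul_eq_zero.1 this).resolve_right hpair.ne', zero_smul]
    exact C.isPos_zero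
  · exact ((C.isPos_iff_not_isNeg (C.apply_mem_roots (inv_mem hv) (C.simple_mem j))).2
      hneg).smul (hc j)

/-- With `v` from `exists_isDominant_apply_isPos_inv_apply`, `ν = v x - descentWeight v` is
dominant because `⟪v x, α_i∨⟫` is a positive integer whenever `v⁻¹ α_i < 0`. -/
theorem exists_eq_inv_apply_add_steinberg {x : V} (hx : x ∈ C.X) :
    ∃ v ∈ C.W, ∃ ν ∈ C.X, C.IsDominant ν ∧ x = v⁻¹ ν + C.steinberg v := by
  obtain ⟨v, hv, hdom, hzero⟩ := C.exists_isDominant_apply_isPos_inv_apply hx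
  refine ⟨v, hv, v x - C.descentWeight v,
    sub_mem (C.X_stable v hv x hx) (C.descentWeight_mem_X v), fun i => ?_, ?_⟩
  · rw [pairing_sub, pairing_descentWeight]
    split_ifs with hneg
    · obtain ⟨n, hn⟩ := C.exists_pairing_simple_eq_intCast (C.X_stable v hv x hx) i
      have hne : pairing (v x) (C.π i) ≠ 0 := fun h0 =>
        C.not_isPos_and_isNeg (C.apply_mem_roots (inv_mem hv) (C.simple_mem i))
          ⟨hzero i h0, hneg⟩
      have h0 := hdom i
      rw [hn] at hne h0 ⊢
      have : (1 : ℤ) ≤ n := by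
        have : (0 : ℤ) ≤ n := by exact_mod_cast h0
        have : n ≠ 0 := by exact_mod_cast hne
        omega
      rw [sub_nonneg]
      exact_mod_cast this
    · simpa using hdom i
  · rw [steinberg_eq_inv_apply_descentWeight, ← map_add, sub_add_cancel]
    simp

theorem steinberg_eq_or_normLexLT {v : V ≃ₗ[ℝ] V} (hv : v ∈ C.W) {ν : V} (hν : C.IsDominant ν) :
    C.steinberg v = v⁻¹ ν + C.steinberg v ∨
      C.NormLexLT (C.steinberg v) (v⁻¹ ν + C.steinberg v) := by
  rcases eq_or_ne ν 0 with rfl | hν0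
  · simp
  refine Or.inr (Or.inl ?_)
  have hσ := (C.isDominant_descentWeight v)
  rw [steinberg_eq_inv_apply_descentWeight, ← map_add, C.inner_invariant _ (inv_mem hv),
    C.inner_invariant _ (inv_mem hv), real_inner_add_add_self]
  have := hν.inner_nonneg hσ
  have := real_inner_self_pos.2 hν0
  linarith

/-- The heart of Steinberg's argument: for `ν` dominant, every other `gν` in the orbit of
`v⁻¹ ν` gives a smaller weight `gν + e_v`. With `δ = ν - v g ν ≥ 0` one has
`|v⁻¹ ν + e_v|² - |gν + e_v|² = 2⟪δ, descentWeight v⟫ ≥ 0`, and if this vanishes then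
`(v⁻¹ ν + e_v) - (gν + e_v) = v⁻¹ δ ≥ 0`. -/
theorem normLexLT_apply_add_steinberg {v : V ≃ₗ[ℝ] V} (hv : v ∈ C.W) {ν : V}
    (hν : C.IsDominant ν) {g : V ≃ₗ[ℝ] V} (hg : g ∈ C.W) (hne : g ν ≠ v⁻¹ ν) :
    C.NormLexLT (g ν + C.steinberg v) (v⁻¹ ν + C.steinberg v) := by
  set σ := C.descentWeight v
  set δ := ν - (v * g) ν
  have hδ : C.IsPos δ := hν.isPos_sub_apply (mul_mem hv hg)
  have hinv : ∀ y, ⟪v⁻¹ y, v⁻¹ y⟫_ℝ = ⟪y, y⟫_ℝ := fun y => C.inner_invariant _ (inv_mem hv) y y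
  have hgν : g ν = v⁻¹ ((v * g) ν) := by simp
  have hnorm : ⟪g ν + C.steinberg v, g ν + C.steinberg v⟫_ℝ =
      ⟪v⁻¹ ν + C.steinberg v, v⁻¹ ν + C.steinberg v⟫_ℝ - 2 * ⟪δ, σ⟫_ℝ := by
    rw [steinberg_eq_inv_apply_descentWeight, hgν, ← map_add, ← map_add, hinv, hinv,
      real_inner_add_add_self, real_inner_add_add_self, C.inner_invariant _ (mul_mem hv hg),
      inner_sub_left]
    ring
  have hdiff : v⁻¹ ν + C.steinberg v - (g ν + C.steinberg v) = v⁻¹ δ := by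
    rw [hgν, map_sub]; abel
  rcases (real_inner_comm σ δ ▸ (C.isDominant_descentWeight v).inner_nonneg_of_isPos hδ :
      0 ≤ ⟪δ, σ⟫_ℝ).lt_or_eq with hpos | hzero
  · exact Or.inl (by linarith)
  · refine Or.inr ⟨by linarith, hdiff ▸
      C.isPos_inv_apply_of_inner_descentWeight_eq_zero hv hδ hzero.symm, fun h => hne ?_⟩
    exact add_right_cancel h

/-! ### The group ring -/

def actXHom (g : V ≃ₗ[ℝ] V) (hg : g ∈ C.W) : C.X →+ C.X where
  toFun := C.actX g hg
  map_zero' := Subtype.ext (map_zero g)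
  map_add' x y := Subtype.ext (map_add g (x : V) y)

def wActHom (g : V ≃ₗ[ℝ] V) (hg : g ∈ C.W) : C.GroupRing →+* C.GroupRing :=
  AddMonoidAlgebra.mapDomainRingHom ℤ (C.actXHom g hg)

theorem wActHom_apply (g : V ≃ₗ[ℝ] V) (hg : g ∈ C.W) (m : C.GroupRing) :
    C.wActHom g hg m = C.wAct g hg m := rfl

theorem wAct_single (g : V ≃ₗ[ℝ] V) (hg : g ∈ C.W) (z : C.X) (a : ℤ) :
    C.wAct g hg (AddMonoidAlgebra.single z a) = AddMonoidAlgebra.single (C.actX g hg z) a :=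
  AddMonoidAlgebra.mapDomain_single

def invariants : Subring C.GroupRing :=
  ⨅ (g) (hg : g ∈ C.W), (C.wActHom g hg).eqLocus (RingHom.id _)

theorem mem_invariants {m : C.GroupRing} : m ∈ C.invariants ↔ C.IsWInvariant m := by
  simp only [invariants, Subring.mem_iInf, RingHom.mem_eqLocus, wActHom_apply, RingHom.id_apply,
    IsWInvariant]

def orbitFinset (z : C.X) : Finset C.X :=
  ((C.finite_orbit z.2).preimage Subtype.val_injective.injOn).toFinset

theorem mem_orbitFinset {z y : C.X} : y ∈ C.orbitFinset z ↔ ∃ g ∈ C.W, g (z : V) = y := by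
  simp [orbitFinset, orbit]

def orbitSum (z : C.X) : C.GroupRing := ∑ y ∈ C.orbitFinset z, AddMonoidAlgebra.single y 1

theorem orbitSum_mem_invariants (z : C.X) : C.orbitSum z ∈ C.invariants := by
  rw [mem_invariants]
  intro g hg
  rw [orbitSum, ← wActHom_apply, map_sum]
  simp only [wActHom_apply, wAct_single]
  refine Finset.sum_nbij' (C.actX g hg) (C.actX g⁻¹ (inv_mem hg)) ?_ ?_ ?_ ?_ fun _ _ => rfl
  · simp only [mem_orbitFinset]
    rintro y ⟨h, hh, hy⟩
    exact ⟨g * h, mul_mem hg hh, by simp [actX, ← hy]⟩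
  · simp only [mem_orbitFinset]
    rintro y ⟨h, hh, hy⟩
    exact ⟨g⁻¹ * h, mul_mem (inv_mem hg) hh, by simp [actX, ← hy]⟩
  · exact fun y _ => Subtype.ext (by simp [actX])
  · exact fun y _ => Subtype.ext (by simp [actX])

theorem orbitSum_mul_single (z e : C.X) :
    C.orbitSum z * AddMonoidAlgebra.single e 1 =
      ∑ y ∈ C.orbitFinset z, AddMonoidAlgebra.single (y + e) 1 := by
  simp only [orbitSum, Finset.sum_mul, AddMonoidAlgebra.single_mul_single, mul_one]

/-- For `x = v⁻¹ ν + e_v` as in `exists_eq_inv_apply_add_steinberg`,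
`(∑_{μ ∈ Wν} e^μ) e^{e_v} = e^x + ∑_{μ ≠ v⁻¹ν} e^{μ + e_v}` with every `μ + e_v` below `x`,
while `e^{e_v}` is `m_v` up to terms below `e_v`. -/
theorem single_one_mem_span (m : (V ≃ₗ[ℝ] V) → C.GroupRing)
    (hcoeff : ∀ v (hv : v ∈ C.W), C.coeff (m v) ⟨C.steinberg v, C.steinberg_mem hv⟩ = 1)
    (hsupp : ∀ v ∈ C.W, ∀ μ ∈ C.supp (m v), C.AntiLE (μ : V) (C.steinberg v)) (x : C.X) :
    AddMonoidAlgebra.single x 1 ∈ Submodule.span C.invariants (m '' C.W) := by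
  set M := Submodule.span C.invariants (m '' C.W)
  induction x using C.wellFounded_normLexLT.induction with
  | _ x ih =>
  obtain ⟨v, hv, ν, hνX, hν, hx⟩ := C.exists_eq_inv_apply_add_steinberg x.2
  set e : C.X := ⟨C.steinberg v, C.steinberg_mem hv⟩
  have hbelow : ∀ κ : C.X, C.NormLexLT κ e → C.NormLexLT κ x := by
    rcases C.steinberg_eq_or_normLexLT hv hν with h | h <;> rw [← hx] at h
    · exact fun κ hκ => h ▸ hκ
    · exact fun κ hκ => hκ.trans h
  have he : AddMonoidAlgebra.single e 1 ∈ M :=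
    AddMonoidAlgebra.single_one_mem_of_coeff_eq_one M.toAddSubgroup
      (Submodule.subset_span ⟨v, hv, rfl⟩)
      (hcoeff v hv) fun κ hκ hne => ih κ (hbelow κ
        (C.normLexLT_of_antiLE (hsupp v hv κ hκ) (Subtype.coe_ne_coe.2 hne)))
  set z : C.X := ⟨ν, hνX⟩
  set z₀ : C.X := ⟨v⁻¹ ν, C.X_stable _ (inv_mem hv) ν hνX⟩
  have hz₀ : z₀ ∈ C.orbitFinset z := C.mem_orbitFinset.2 ⟨v⁻¹, inv_mem hv, rfl⟩
  have hprod := C.orbitSum_mul_single z e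
  rw [← Finset.add_sum_erase _ _ hz₀, show z₀ + e = x from Subtype.ext hx.symm] at hprod
  have hmul : C.orbitSum z * AddMonoidAlgebra.single e 1 ∈ M :=
    M.smul_mem (⟨C.orbitSum z, C.orbitSum_mem_invariants z⟩ : C.invariants) he
  rw [eq_sub_of_add_eq hprod.symm]
  refine sub_mem hmul (sum_mem fun y hy => ih _ ?_)
  obtain ⟨hne, hy⟩ := Finset.mem_erase.1 hy
  obtain ⟨g, hg, hgy⟩ := C.mem_orbitFinset.1 hy
  have := C.normLexLT_apply_add_steinberg hv hν hg (hgy ▸ Subtype.coe_ne_coe.2 hne)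
  rwa [hgy, ← hx] at this

theorem span_image_eq_top (m : (V ≃ₗ[ℝ] V) → C.GroupRing)
    (hcoeff : ∀ v (hv : v ∈ C.W), C.coeff (m v) ⟨C.steinberg v, C.steinberg_mem hv⟩ = 1)
    (hsupp : ∀ v ∈ C.W, ∀ μ ∈ C.supp (m v), C.AntiLE (μ : V) (C.steinberg v)) :
    Submodule.span C.invariants (m '' C.W) = ⊤ :=
  Submodule.toAddSubgroup_eq_top.1 <| AddMonoidAlgebra.eq_top_of_forall_single_one_mem _
    (C.single_one_mem_span m hcoeff hsupp)

theorem exists_sum_eq_of_span_image_eq_top {m : (V ≃ₗ[ℝ] V) → C.GroupRing}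
    (htop : Submodule.span C.invariants (m '' C.W) = ⊤) (x : C.GroupRing) :
    ∃ (F : Finset (V ≃ₗ[ℝ] V)) (c : (V ≃ₗ[ℝ] V) → C.GroupRing),
      (∀ v ∈ F, v ∈ C.W ∧ C.IsWInvariant (c v)) ∧ x = ∑ v ∈ F, c v * m v := by
  obtain ⟨F, c, hF, hx⟩ :=
    C.invariants.exists_finset_of_mem_span_image m (htop ▸ Submodule.mem_top)
  exact ⟨F, c, fun v hv => ⟨(hF v hv).1, C.mem_invariants.1 (hF v hv).2⟩, hx⟩

theorem antiLE_self {x : V} (hx : x ∈ C.X) : C.AntiLE x x := by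
  obtain ⟨g, hg, hdom⟩ := C.exists_isDominant_apply (neg_mem hx)
  exact Or.inr ⟨g (-x), C.X_stable g hg _ (neg_mem hx), hdom, g⁻¹, inv_mem hg, g⁻¹, inv_mem hg,
    Relation.ReflTransGen.refl, by simp, by simp⟩

theorem coeff_expoOf_steinberg {v : V ≃ₗ[ℝ] V} (hv : v ∈ C.W) :
    C.coeff (C.expoOf (C.steinberg v)) ⟨C.steinberg v, C.steinberg_mem hv⟩ = 1 := by
  simp [expoOf, expo, coeff, C.steinberg_mem hv]

theorem antiLE_steinberg_of_mem_supp_expoOf {v : V ≃ₗ[ℝ] V} (hv : v ∈ C.W) {μ : C.X}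
    (hμ : μ ∈ C.supp (C.expoOf (C.steinberg v))) : C.AntiLE μ (C.steinberg v) := by
  simp only [expoOf, expo, supp, dif_pos (C.steinberg_mem hv), AddMonoidAlgebra.coeff_single,
    Finsupp.support_single _ one_ne_zero, Finset.mem_singleton] at hμ
  exact hμ ▸ C.antiLE_self (C.steinberg_mem hv)

end RootSystemData

/-- If for each `v ∈ W` an element `m_v ∈ ℤ[X]` is given whose coefficient
at `e^{e_v}` is `1` and whose support is contained in `{μ : μ ≤ₐ e_v}`, then the family
`{m_v}` generates `ℤ[X]` as a module over the invariant subring `ℤ[X]^W`.  In particular,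
the `e^{e_v}` generate `ℤ[X]` as a `ℤ[X]^W`-module (Steinberg's theorem). -/
theorem statement_0
    {V : Type} [NormedAddCommGroup V] [InnerProductSpace ℝ V] [FiniteDimensional ℝ V]
    (C : RootSystemData V)
    (m : (V ≃ₗ[ℝ] V) → C.GroupRing)
    (hcoeff : ∀ v (hv : v ∈ C.W), C.coeff (m v) ⟨C.steinberg v, C.steinberg_mem hv⟩ = 1)
    (hsupp : ∀ v ∈ C.W, ∀ μ ∈ C.supp (m v), C.AntiLE (μ : V) (C.steinberg v)) :
    (∀ x : C.GroupRing, ∃ (F : Finset (V ≃ₗ[ℝ] V)) (c : (V ≃ₗ[ℝ] V) → C.GroupRing),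
        (∀ v ∈ F, v ∈ C.W ∧ C.IsWInvariant (c v)) ∧ x = ∑ v ∈ F, c v * m v) ∧
    (∀ x : C.GroupRing, ∃ (F : Finset (V ≃ₗ[ℝ] V)) (c : (V ≃ₗ[ℝ] V) → C.GroupRing),
        (∀ v ∈ F, v ∈ C.W ∧ C.IsWInvariant (c v)) ∧
        x = ∑ v ∈ F, c v * C.expoOf (C.steinberg v)) := by
  exact ⟨C.exists_sum_eq_of_span_image_eq_top (C.span_image_eq_top m hcoeff hsupp),
    C.exists_sum_eq_of_span_image_eq_top (C.span_image_eq_top _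
      (fun v hv => C.coeff_expoOf_steinberg hv)
      fun v hv μ hμ => C.antiLE_steinberg_of_mem_supp_expoOf hv hμ)⟩
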